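/- arXiv:2307.12982 — 6 statements merged into one kernel-verified Lean document; each statement's English description precedes it below -/
import Mathlib

section
/- Fix 0 ≤ j < k. For any real γ, the scaled score difference (1/N)(GAIC^γ_j(N) − GAIC^γ_k(N)) converges as N → ∞ to L := (1/(2σ²)) Σ_{i=j+1}^{k} ψ_σ(λ_i)² − γ(k − j), and moreover L ≥ ((k − j)/(2σ²)) · (ψ_σ(λ_k)² − 2γσ²). -/
/-!
The scores `GAIC_j` and `GAIC_k` share the terms `i > k`, so their difference is
`N ((1/(2σ²)) Σ_{j<i≤k} ℓ_i(N)² − γ(k − j))` plus a constant; dividing by `N` and letting the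
spiked eigenvalues converge gives the limit. The lower bound holds because `ψ_σ` is increasing
on `[σ, ∞)`, so `ψ_σ(λ_i) ≥ ψ_σ(λ_k) > 0` for every `i ≤ k`.
-/

open Filter

noncomputable def psi (σ x : ℝ) : ℝ := x + σ ^ 2 / x

noncomputable def GAIC (σ : ℝ) (q : ℕ) (ℓ : ℕ → ℕ → ℝ) (γ : ℝ) (j N : ℕ) : ℝ :=
  ((N : ℝ) / (2 * σ ^ 2)) * ∑ i ∈ Finset.Icc (j + 1) q, (ℓ i N) ^ 2
    + γ * ((N : ℝ) * (j : ℝ) - (j : ℝ) * ((j : ℝ) - 1) / 2)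

open Finset

lemma psi_pos (σ : ℝ) {x : ℝ} (hx : 0 < x) : 0 < psi σ x := by
  unfold psi
  positivity

lemma psi_monotoneOn {σ : ℝ} (hσ : 0 < σ) : MonotoneOn (psi σ) (Set.Ici σ) := by
  intro x (hx : σ ≤ x) y (hy : σ ≤ y) hxy
  have hx0 : 0 < x := hσ.trans_le hx
  have hy0 : 0 < y := hσ.trans_le hy
  have hdiff : psi σ y - psi σ x = (y - x) * (x * y - σ ^ 2) / (x * y) := by
    unfold psi
    field_simp
    ring
  rw [← sub_nonneg, hdiff]
  exact div_nonneg (mul_nonneg (sub_nonneg.2 hxy) (by nlinarith)) (by positivity)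

lemma GAIC_sub_GAIC (σ : ℝ) {q j k : ℕ} (ℓ : ℕ → ℕ → ℝ) (γ : ℝ) (hjk : j ≤ k) (hkq : k ≤ q)
    (N : ℕ) :
    GAIC σ q ℓ γ j N - GAIC σ q ℓ γ k N =
      N * ((1 / (2 * σ ^ 2)) * ∑ i ∈ Icc (j + 1) k, ℓ i N ^ 2 - γ * ((k : ℝ) - j))
        + γ * ((k : ℝ) * (k - 1) - j * (j - 1)) / 2 := by
  have hsplit : ∑ i ∈ Icc (j + 1) q, ℓ i N ^ 2
      = ∑ i ∈ Icc (j + 1) k, ℓ i N ^ 2 + ∑ i ∈ Icc (k + 1) q, ℓ i N ^ 2 := by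
    simp only [Icc_add_one_left_eq_Ioc]
    exact (sum_Ioc_consecutive _ hjk hkq).symm
  simp only [GAIC, hsplit]
  ring

lemma tendsto_one_div_mul_affine {u : ℕ → ℝ} {a : ℝ} (hu : Tendsto u atTop (nhds a)) (c : ℝ) :
    Tendsto (fun N : ℕ => (1 / (N : ℝ)) * (N * u N + c)) atTop (nhds a) := by
  have hlim : Tendsto (fun N : ℕ => u N + c * (1 / (N : ℝ))) atTop (nhds (a + c * 0)) :=
    hu.add (tendsto_one_div_atTop_nhds_zero_nat.const_mul c)
  rw [mul_zero, add_zero] at hlim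
  refine hlim.congr' ?_
  filter_upwards [eventually_ne_atTop 0] with N hN
  field_simp

lemma card_mul_psi_sq_le_sum {σ : ℝ} (hσ : 0 < σ) {lam : ℕ → ℝ} {j k : ℕ}
    (hk : σ ≤ lam k) (hanti : ∀ i ∈ Icc (j + 1) k, lam k ≤ lam i) :
    ((k : ℝ) - j) * psi σ (lam k) ^ 2 ≤ ∑ i ∈ Icc (j + 1) k, psi σ (lam i) ^ 2 := by
  have hbound : ∀ i ∈ Icc (j + 1) k, psi σ (lam k) ^ 2 ≤ psi σ (lam i) ^ 2 := fun i hi =>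
    pow_le_pow_left₀ (psi_pos σ (hσ.trans_le hk)).le
      (psi_monotoneOn hσ hk (hk.trans (hanti i hi)) (hanti i hi)) 2
  calc ((k : ℝ) - j) * psi σ (lam k) ^ 2 ≤ #(Icc (j + 1) k) • psi σ (lam k) ^ 2 := by
        rw [nsmul_eq_mul, Nat.card_Icc]
        gcongr
        rw [sub_le_iff_le_add, ← Nat.cast_add, Nat.cast_le]
        omega
    _ ≤ ∑ i ∈ Icc (j + 1) k, psi σ (lam i) ^ 2 := card_nsmul_le_sum _ _ _ hbound

theorem gaic_diff_tendsto_below_general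
    (σ : ℝ) (hσ : 0 < σ) (q k : ℕ) (hkq : k ≤ q)
    (lam : ℕ → ℝ)
    (hlam_anti : ∀ i j : ℕ, 1 ≤ i → i ≤ j → j ≤ k → lam j ≤ lam i)
    (hlam_gt : ∀ i : ℕ, 1 ≤ i → i ≤ k → σ < lam i)
    (ℓ : ℕ → ℕ → ℝ)
    (hspike : ∀ i : ℕ, 1 ≤ i → i ≤ k →
      Tendsto (fun N : ℕ => ℓ i N) atTop (nhds (psi σ (lam i))))
    (j : ℕ) (hjk : j < k) (γ : ℝ) :
    Tendsto (fun N : ℕ => (1 / (N : ℝ)) * (GAIC σ q ℓ γ j N - GAIC σ q ℓ γ k N)) atTop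
      (nhds ((1 / (2 * σ ^ 2)) * ∑ i ∈ Finset.Icc (j + 1) k, (psi σ (lam i)) ^ 2
        - γ * ((k : ℝ) - (j : ℝ)))) ∧
    (1 / (2 * σ ^ 2)) * ∑ i ∈ Finset.Icc (j + 1) k, (psi σ (lam i)) ^ 2
        - γ * ((k : ℝ) - (j : ℝ))
      ≥ (((k : ℝ) - (j : ℝ)) / (2 * σ ^ 2)) * ((psi σ (lam k)) ^ 2 - 2 * γ * σ ^ 2) := by
  have hrange : ∀ i ∈ Icc (j + 1) k, 1 ≤ i ∧ i ≤ k := fun i hi => by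
    rw [mem_Icc] at hi
    omega
  constructor
  · have hsum : Tendsto (fun N => ∑ i ∈ Icc (j + 1) k, ℓ i N ^ 2) atTop
        (nhds (∑ i ∈ Icc (j + 1) k, psi σ (lam i) ^ 2)) :=
      tendsto_finsetSum _ fun i hi => (hspike i (hrange i hi).1 (hrange i hi).2).pow 2
    simp_rw [GAIC_sub_GAIC σ ℓ γ hjk.le hkq]
    exact tendsto_one_div_mul_affine ((hsum.const_mul _).sub_const _) _
  · have hsum_ge := card_mul_psi_sq_le_sum hσ (hlam_gt k (by omega) le_rfl).le
      fun i hi => hlam_anti i k (hrange i hi).1 (hrange i hi).2 le_rfl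
    have hσ2 : (0 : ℝ) < 2 * σ ^ 2 := by positivity
    rw [ge_iff_le, ← sub_nonneg]
    have hgap : (1 / (2 * σ ^ 2)) * ∑ i ∈ Icc (j + 1) k, psi σ (lam i) ^ 2 - γ * ((k : ℝ) - j)
          - ((k : ℝ) - j) / (2 * σ ^ 2) * (psi σ (lam k) ^ 2 - 2 * γ * σ ^ 2)
        = (∑ i ∈ Icc (j + 1) k, psi σ (lam i) ^ 2 - ((k : ℝ) - j) * psi σ (lam k) ^ 2)
          / (2 * σ ^ 2) := by
      field_simp
      ring
    rw [hgap]
    exact div_nonneg (sub_nonneg.2 hsum_ge) hσ2.le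

/-- For fixed `0 ≤ j < k` and any real `γ`, the scaled score difference
`(1/N)(GAIC^γ_j(N) − GAIC^γ_k(N))` converges to
`L = (1/(2σ²)) Σ_{i=j+1}^{k} ψ_σ(λ_i)² − γ(k − j)`,
and `L ≥ ((k − j)/(2σ²))(ψ_σ(λ_k)² − 2γσ²)`. -/
theorem gaic_diff_tendsto_below
    (σ : ℝ) (hσ : 0 < σ) (q k : ℕ) (hq : 1 ≤ q) (hkq : k ≤ q)
    (lam : ℕ → ℝ)
    (hlam_anti : ∀ i j : ℕ, 1 ≤ i → i ≤ j → j ≤ k → lam j ≤ lam i)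
    (hlam_gt : ∀ i : ℕ, 1 ≤ i → i ≤ k → σ < lam i)
    (ℓ : ℕ → ℕ → ℝ)
    (hℓ_anti : ∀ N i j : ℕ, 1 ≤ i → i ≤ j → j ≤ q → ℓ j N ≤ ℓ i N)
    (hspike : ∀ i : ℕ, 1 ≤ i → i ≤ k →
      Tendsto (fun N : ℕ => ℓ i N) atTop (nhds (psi σ (lam i))))
    (hbulk : ∀ i : ℕ, k < i → i ≤ q →
      Tendsto (fun N : ℕ => ℓ i N) atTop (nhds (2 * σ)))
    (j : ℕ) (hjk : j < k) (γ : ℝ) :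
    Tendsto (fun N : ℕ => (1 / (N : ℝ)) * (GAIC σ q ℓ γ j N - GAIC σ q ℓ γ k N)) atTop
      (nhds ((1 / (2 * σ ^ 2)) * ∑ i ∈ Finset.Icc (j + 1) k, (psi σ (lam i)) ^ 2
        - γ * ((k : ℝ) - (j : ℝ)))) ∧
    (1 / (2 * σ ^ 2)) * ∑ i ∈ Finset.Icc (j + 1) k, (psi σ (lam i)) ^ 2
        - γ * ((k : ℝ) - (j : ℝ))
      ≥ (((k : ℝ) - (j : ℝ)) / (2 * σ ^ 2)) * ((psi σ (lam k)) ^ 2 - 2 * γ * σ ^ 2) :=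
  gaic_diff_tendsto_below_general σ hσ q k hkq lam hlam_anti hlam_gt ℓ hspike j hjk γ
end

section
/- (Deterministic form of Theorem 2.1(a).) If γ ≤ 2, then there exists N₀ such that for all N ≥ N₀, every γ-minimizer j* at N satisfies j* ≥ k. -/
open Filter

/-- Deterministic form of Theorem 2.1(a): if `γ ≤ 2`, then eventually every
`γ`-minimizer `j*` satisfies `j* ≥ k`. -/
theorem gaic_no_underestimation
    (σ : ℝ) (hσ : 0 < σ) (q k : ℕ) (hq : 1 ≤ q) (hkq : k ≤ q)
    (lam : ℕ → ℝ)
    (hlam_anti : ∀ i j : ℕ, 1 ≤ i → i ≤ j → j ≤ k → lam j ≤ lam i)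
    (hlam_gt : ∀ i : ℕ, 1 ≤ i → i ≤ k → σ < lam i)
    (ℓ : ℕ → ℕ → ℝ)
    (hℓ_anti : ∀ N i j : ℕ, 1 ≤ i → i ≤ j → j ≤ q → ℓ j N ≤ ℓ i N)
    (hspike : ∀ i : ℕ, 1 ≤ i → i ≤ k →
      Tendsto (fun N : ℕ => ℓ i N) atTop (nhds (psi σ (lam i))))
    (hbulk : ∀ i : ℕ, k < i → i ≤ q →
      Tendsto (fun N : ℕ => ℓ i N) atTop (nhds (2 * σ)))
    (γ : ℝ) (hγ : γ ≤ 2) :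
    ∃ N₀ : ℕ, ∀ N ≥ N₀, ∀ jstar : ℕ, jstar ≤ q →
      (∀ j : ℕ, j ≤ q → GAIC σ q ℓ γ jstar N ≤ GAIC σ q ℓ γ j N) → k ≤ jstar := by
  have hσ2 : (0:ℝ) < σ ^ 2 := by positivity
  -- ψ σ (lam i) > 2σ so its square exceeds 4σ²
  have hpsi : ∀ i : ℕ, 1 ≤ i → i ≤ k → 2 * σ < psi σ (lam i) := by
    intro i h1 h2
    have hl := hlam_gt i h1 h2
    have hlpos : 0 < lam i := hσ.trans hl
    have hkey : psi σ (lam i) - 2 * σ = (lam i - σ) ^ 2 / lam i := by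
      unfold psi; field_simp; ring
    have hpos : 0 < (lam i - σ) ^ 2 / lam i := by
      have h0 : 0 < (lam i - σ) ^ 2 := by nlinarith
      exact div_pos h0 hlpos
    linarith
  have hev : ∀ᶠ N in atTop, ∀ i ∈ Finset.Icc 1 k, 4 * σ ^ 2 < (ℓ i N) ^ 2 := by
    rw [Filter.eventually_all_finset]
    intro i hi
    rw [Finset.mem_Icc] at hi
    have ht : Tendsto (fun N : ℕ => (ℓ i N) ^ 2) atTop (nhds ((psi σ (lam i)) ^ 2)) :=
      (hspike i hi.1 hi.2).pow 2
    have h4 : 4 * σ ^ 2 < (psi σ (lam i)) ^ 2 := by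
      have h2σ : (0:ℝ) ≤ 2 * σ := by positivity
      nlinarith [hpsi i hi.1 hi.2]
    exact ht.eventually (eventually_gt_nhds h4)
  rw [Filter.eventually_atTop] at hev
  obtain ⟨N₁, hN₁⟩ := hev
  refine ⟨max N₁ (q + 1), fun N hN jstar hjq hmin => ?_⟩
  by_contra hlt
  push_neg at hlt
  have hNN₁ : N₁ ≤ N := le_trans (le_max_left _ _) hN
  have hNq : q + 1 ≤ N := le_trans (le_max_right _ _) hN
  have hj1k : jstar + 1 ≤ k := hlt
  have hj1q : jstar + 1 ≤ q := le_trans hj1k hkq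
  have hNpos : (0:ℝ) < N := by
    have : 1 ≤ N := le_trans (Nat.le_add_left 1 q) hNq
    exact_mod_cast Nat.lt_of_lt_of_le Nat.zero_lt_one this
  have hjN : (jstar : ℝ) ≤ N := by
    have : jstar ≤ N := by omega
    exact_mod_cast this
  have hl2 : 4 * σ ^ 2 < (ℓ (jstar + 1) N) ^ 2 :=
    hN₁ N hNN₁ (jstar + 1) (Finset.mem_Icc.2 ⟨Nat.le_add_left 1 jstar, hj1k⟩)
  have hmem : jstar + 1 ∈ Finset.Icc (jstar + 1) q := Finset.mem_Icc.2 ⟨le_refl _, hj1q⟩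
  have hsplit : ∑ i ∈ Finset.Icc (jstar + 1) q, (ℓ i N) ^ 2
      = (ℓ (jstar + 1) N) ^ 2 + ∑ i ∈ Finset.Icc (jstar + 1 + 1) q, (ℓ i N) ^ 2 := by
    rw [← Finset.add_sum_erase _ _ hmem, Finset.Icc_erase_left, ← Finset.Icc_add_one_left_eq_Ioc]
  have hdiff : GAIC σ q ℓ γ jstar N - GAIC σ q ℓ γ (jstar + 1) N
      = (N : ℝ) / (2 * σ ^ 2) * (ℓ (jstar + 1) N) ^ 2 - γ * ((N : ℝ) - jstar) := by
    unfold GAIC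
    rw [hsplit]
    push_cast
    ring
  have hkey : 2 * (N : ℝ) < (N : ℝ) / (2 * σ ^ 2) * (ℓ (jstar + 1) N) ^ 2 := by
    rw [div_mul_eq_mul_div, lt_div_iff₀ (by positivity)]
    nlinarith
  have hmon : γ * ((N : ℝ) - jstar) ≤ 2 * ((N : ℝ) - jstar) :=
    mul_le_mul_of_nonneg_right hγ (by linarith)
  have hjpos : (0:ℝ) ≤ (jstar : ℝ) := Nat.cast_nonneg _
  have hmin' := hmin (jstar + 1) hj1q
  linarith
end

section
/- (Deterministic form of Theorem 2.1(c): strong consistency of GAIC(γ).) Suppose k ≥ 1, γ > 2, and ψ_σ(λ_k) > √(2γ)·σ (equivalently, λ_k exceeds the threshold λ_γ = ψ_σ^{-1}(√(2γ)σ)). Then there exists N₀ such that for all N ≥ N₀, every γ-minimizer j* at N satisfies j* = k. -/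
open Filter

/-!
Raising the model order from `j` to `j + 1` changes the score by `γ(N - j) - N ℓ_{j+1}² / (2σ²)`.
For `j < k`, eventually `ℓ_{j+1} ≥ ℓ_k > √(2γ)·σ`, so this is negative. For `j ≥ k`,
`ℓ_{j+1}² / (2σ²) → 2 < γ`, so it grows like `(γ - 2) N` and is eventually positive. Hence for
large `N` the score strictly decreases up to `k` and strictly increases after it.
-/

open Topology

theorem eq_of_forall_le_of_valley {α : Type*} [Preorder α] {f : ℕ → α} {k q j : ℕ}
    (hdown : ∀ i < k, f (i + 1) < f i) (hup : ∀ i, k ≤ i → i < q → f i < f (i + 1))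
    (hkq : k ≤ q) (hjq : j ≤ q) (hmin : ∀ i ≤ q, f j ≤ f i) : j = k := by
  have hanti : StrictAntiOn f (Set.Icc 0 k) :=
    strictAntiOn_of_add_one_lt Set.ordConnected_Icc fun i _ _ hi => hdown i hi.2
  have hmono : StrictMonoOn f (Set.Icc k q) :=
    strictMonoOn_of_lt_add_one Set.ordConnected_Icc fun i _ hi hi' => hup i hi.1 hi'.2
  rcases lt_trichotomy j k with hjk | rfl | hjk
  · exact absurd (hmin k hkq) (hanti ⟨j.zero_le, hjk.le⟩ ⟨k.zero_le, le_rfl⟩ hjk).not_ge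
  · rfl
  · exact absurd (hmin k hkq) (hmono ⟨le_rfl, hkq⟩ ⟨hjk.le, hjq⟩ hjk).not_ge

theorem GAIC_succ (σ : ℝ) (ℓ : ℕ → ℕ → ℝ) (γ : ℝ) {q j : ℕ} (N : ℕ) (hj : j < q) :
    GAIC σ q ℓ γ (j + 1) N =
      GAIC σ q ℓ γ j N - N * (ℓ (j + 1) N ^ 2 / (2 * σ ^ 2) - γ) - γ * j := by
  rw [GAIC, GAIC, Finset.Icc_add_one_left_eq_Ioc (j + 1), ← Finset.add_sum_Ioc_eq_sum_Icc hj]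
  push_cast
  ring

section

variable {σ γ : ℝ} {q : ℕ} {ℓ : ℕ → ℕ → ℝ}

theorem GAIC_succ_lt (hσ : 0 < σ) (hγ : 0 ≤ γ) {j N : ℕ} (hj : j < q) (hN : 0 < N)
    (hthr : √(2 * γ) * σ < ℓ (j + 1) N) : GAIC σ q ℓ γ (j + 1) N < GAIC σ q ℓ γ j N := by
  have hsq : 2 * γ * σ ^ 2 < ℓ (j + 1) N ^ 2 := by
    have := pow_lt_pow_left₀ hthr (by positivity) two_ne_zero
    rwa [mul_pow, Real.sq_sqrt (by positivity)] at this
  have hgap : 0 < ℓ (j + 1) N ^ 2 / (2 * σ ^ 2) - γ := by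
    rw [sub_pos, lt_div_iff₀ (by positivity)]
    linarith
  rw [GAIC_succ σ ℓ γ N hj]
  linarith [mul_pos (Nat.cast_pos.mpr hN : (0 : ℝ) < N) hgap, mul_nonneg hγ j.cast_nonneg]

theorem eventually_GAIC_lt_succ (hσ : σ ≠ 0) (hγ : 2 < γ) {j : ℕ} (hj : j < q)
    (hbulk : Tendsto (fun N => ℓ (j + 1) N) atTop (𝓝 (2 * σ))) :
    ∀ᶠ N in atTop, GAIC σ q ℓ γ j N < GAIC σ q ℓ γ (j + 1) N := by
  have hlim : Tendsto (fun N => ℓ (j + 1) N ^ 2 / (2 * σ ^ 2) - γ) atTop (𝓝 (2 - γ)) := by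
    convert ((hbulk.pow 2).div_const (2 * σ ^ 2)).sub_const γ using 2
    field_simp
  have hdiv : Tendsto (fun N : ℕ => (N : ℝ) * (ℓ (j + 1) N ^ 2 / (2 * σ ^ 2) - γ) + γ * j)
      atTop atBot :=
    tendsto_atBot_add_const_right _ _
      (tendsto_natCast_atTop_atTop.atTop_mul_neg (by linarith) hlim)
  filter_upwards [hdiv.eventually (eventually_lt_atBot 0)] with N hN
  rw [GAIC_succ σ ℓ γ N hj]
  linarith

end

theorem gaic_strong_consistency_general
    (σ : ℝ) (hσ : 0 < σ) (q k : ℕ) (hkq : k ≤ q)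
    (lam : ℕ → ℝ)
    (ℓ : ℕ → ℕ → ℝ)
    (hℓ_anti : ∀ N i j : ℕ, 1 ≤ i → i ≤ j → j ≤ q → ℓ j N ≤ ℓ i N)
    (hspike : ∀ i : ℕ, 1 ≤ i → i ≤ k →
      Tendsto (fun N : ℕ => ℓ i N) atTop (nhds (psi σ (lam i))))
    (hbulk : ∀ i : ℕ, k < i → i ≤ q →
      Tendsto (fun N : ℕ => ℓ i N) atTop (nhds (2 * σ)))
    (hk : 1 ≤ k) (γ : ℝ) (hγ : 2 < γ)
    (hthr : Real.sqrt (2 * γ) * σ < psi σ (lam k)) :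
    ∃ N₀ : ℕ, ∀ N ≥ N₀, ∀ jstar : ℕ, jstar ≤ q →
      (∀ j : ℕ, j ≤ q → GAIC σ q ℓ γ jstar N ≤ GAIC σ q ℓ γ j N) → jstar = k := by
  have hdown : ∀ᶠ N in atTop, ∀ j < k, GAIC σ q ℓ γ (j + 1) N < GAIC σ q ℓ γ j N := by
    filter_upwards [(hspike k hk le_rfl).eventually (eventually_gt_nhds hthr),
      eventually_gt_atTop 0] with N hℓk hN j hj
    exact GAIC_succ_lt hσ (by linarith) (hj.trans_le hkq) hN
      (hℓk.trans_le (hℓ_anti N (j + 1) k j.succ_pos hj hkq))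
  have hup : ∀ᶠ N in atTop, ∀ j ∈ Finset.Ico k q, GAIC σ q ℓ γ j N < GAIC σ q ℓ γ (j + 1) N :=
    (eventually_all_finset _).mpr fun j hj =>
      have ⟨hkj, hjq⟩ := Finset.mem_Ico.mp hj
      eventually_GAIC_lt_succ hσ.ne' hγ hjq (hbulk (j + 1) (Nat.lt_succ_of_le hkj) hjq)
  obtain ⟨N₀, hN₀⟩ := eventually_atTop.mp (hdown.and hup)
  exact ⟨N₀, fun N hN jstar hjq hmin => eq_of_forall_le_of_valley (hN₀ N hN).1
    (fun j hkj hjq => (hN₀ N hN).2 j (Finset.mem_Ico.mpr ⟨hkj, hjq⟩)) hkq hjq hmin⟩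

/-- Deterministic form of Theorem 2.1(c): if `k ≥ 1`, `γ > 2` and
`ψ_σ(λ_k) > √(2γ)·σ`, then eventually every `γ`-minimizer `j*` satisfies `j* = k`. -/
theorem gaic_strong_consistency
    (σ : ℝ) (hσ : 0 < σ) (q k : ℕ) (hq : 1 ≤ q) (hkq : k ≤ q)
    (lam : ℕ → ℝ)
    (hlam_anti : ∀ i j : ℕ, 1 ≤ i → i ≤ j → j ≤ k → lam j ≤ lam i)
    (hlam_gt : ∀ i : ℕ, 1 ≤ i → i ≤ k → σ < lam i)
    (ℓ : ℕ → ℕ → ℝ)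
    (hℓ_anti : ∀ N i j : ℕ, 1 ≤ i → i ≤ j → j ≤ q → ℓ j N ≤ ℓ i N)
    (hspike : ∀ i : ℕ, 1 ≤ i → i ≤ k →
      Tendsto (fun N : ℕ => ℓ i N) atTop (nhds (psi σ (lam i))))
    (hbulk : ∀ i : ℕ, k < i → i ≤ q →
      Tendsto (fun N : ℕ => ℓ i N) atTop (nhds (2 * σ)))
    (hk : 1 ≤ k) (γ : ℝ) (hγ : 2 < γ)
    (hthr : Real.sqrt (2 * γ) * σ < psi σ (lam k)) :
    ∃ N₀ : ℕ, ∀ N ≥ N₀, ∀ jstar : ℕ, jstar ≤ q →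
      (∀ j : ℕ, j ≤ q → GAIC σ q ℓ γ jstar N ≤ GAIC σ q ℓ γ j N) → jstar = k :=
  gaic_strong_consistency_general σ hσ q k hkq lam ℓ hℓ_anti hspike hbulk hk γ hγ hthr
end

section
/- (Deterministic form of Theorem 2.2: consistency of GAIC(2 + δ_N).) Let (δ_N) be a sequence of positive reals with δ_N → 0 and N^{2/3}·δ_N → ∞ as N → ∞. Assume in addition that there is a constant C such that |N^{2/3}(ℓ_i(N) − 2σ)| ≤ C for all N and all k < i ≤ q. Then there exists N₀ such that for all N ≥ N₀, every (2 + δ_N)-minimizer j* at N satisfies j* = k. -/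
/-!
Passing from `j` to `j + 1` components changes the score by `γ (N - j) - N ℓ_{j+1}² / (2σ²)`.
For a spike, `ℓ_{j+1}² / (2σ²) → ψ_σ(λ_{j+1})² / (2σ²) > 2 = lim γ`, so the score drops. For a
bulk eigenvalue, `ℓ_{j+1} = 2σ + O(N^{-2/3})` makes the gain `2N + O(N^{1/3})`, while the penalty
is `(2 + δ_N)(N - j) = 2N + δ_N N + O(1)` with `δ_N N / N^{1/3} → ∞`, so the score rises.
Hence for large `N` the score is strictly decreasing up to `k` and strictly increasing after it.
-/

open Filter Topology

theorem two_mul_lt_psi {σ x : ℝ} (hx : 0 < x) (hσx : σ ≠ x) : 2 * σ < psi σ x := by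
  have h : psi σ x - 2 * σ = (x - σ) ^ 2 / x := by
    unfold psi; field_simp; ring
  have : 0 < (x - σ) ^ 2 / x := div_pos (pow_two_pos_of_ne_zero (sub_ne_zero.2 hσx.symm)) hx
  linarith

theorem eq_of_le_of_strictAntiOn_Iic_of_strictMonoOn_Icc {α β : Type*} [LinearOrder α]
    [Preorder β] {f : α → β} {m b x : α} (hanti : StrictAntiOn f (Set.Iic m))
    (hmono : StrictMonoOn f (Set.Icc m b)) (hxb : x ≤ b) (hx : f x ≤ f m) : x = m := by
  rcases lt_trichotomy x m with hxm | rfl | hmx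
  · exact absurd hx (hanti hxm.le le_rfl hxm).not_ge
  · rfl
  · exact absurd hx (hmono ⟨le_rfl, hmx.le.trans hxb⟩ ⟨hmx.le, hxb⟩ hmx).not_ge

section GAIC

variable {σ : ℝ} {q : ℕ} {ℓ : ℕ → ℕ → ℝ} {j : ℕ}

theorem GAIC_sub_GAIC_succ (hj : j < q) (γ : ℝ) (N : ℕ) :
    GAIC σ q ℓ γ j N - GAIC σ q ℓ γ (j + 1) N
      = (N : ℝ) / (2 * σ ^ 2) * ℓ (j + 1) N ^ 2 - γ * ((N : ℝ) - j) := by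
  rw [GAIC, GAIC, ← Finset.insert_Icc_add_one_left_eq_Icc (by omega : j + 1 ≤ q),
    Finset.sum_insert (by simp)]
  push_cast
  ring

theorem GAIC_succ_lt_GAIC {γ : ℝ} {N : ℕ} (hj : j < q) (hN : 0 < N) (hγ : 0 ≤ γ)
    (hγℓ : γ < ℓ (j + 1) N ^ 2 / (2 * σ ^ 2)) :
    GAIC σ q ℓ γ (j + 1) N < GAIC σ q ℓ γ j N := by
  have hdiff := GAIC_sub_GAIC_succ (σ := σ) (ℓ := ℓ) hj γ N
  have hN' : (0 : ℝ) < N := by exact_mod_cast hN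
  have : γ * N < (N : ℝ) / (2 * σ ^ 2) * ℓ (j + 1) N ^ 2 := by
    rw [div_mul_eq_mul_div, mul_div_assoc, mul_comm γ]
    exact mul_lt_mul_of_pos_left hγℓ hN'
  linarith [mul_nonneg hγ (Nat.cast_nonneg (α := ℝ) j)]

theorem GAIC_lt_GAIC_succ (hσ : 0 < σ) (hj : j < q) {N : ℕ} {t δ C : ℝ} (ht : 1 ≤ t)
    (htN : t ^ 3 = N) (hℓ : |t ^ 2 * (ℓ (j + 1) N - 2 * σ)| ≤ C) (hδ : δ ≤ 1)
    (hgap : 2 * C / σ + C ^ 2 / (2 * σ ^ 2) + 3 * j < t ^ 2 * δ) :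
    GAIC σ q ℓ (2 + δ) j N < GAIC σ q ℓ (2 + δ) (j + 1) N := by
  have hdiff := GAIC_sub_GAIC_succ (σ := σ) (ℓ := ℓ) hj (2 + δ) N
  set ε := ℓ (j + 1) N - 2 * σ with hε
  have hℓε : ℓ (j + 1) N = 2 * σ + ε := by rw [hε]; ring
  have ht0 : 0 < t := one_pos.trans_le ht
  have hj0 : (0 : ℝ) ≤ j := Nat.cast_nonneg j
  have hlin : t ^ 3 * ε ≤ t * C := by
    have := mul_le_mul_of_nonneg_left (abs_le.1 hℓ).2 ht0.le
    linarith [show t ^ 3 * ε = t * (t ^ 2 * ε) by ring]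
  have hquad : t ^ 3 * ε ^ 2 ≤ C ^ 2 :=
    calc t ^ 3 * ε ^ 2 ≤ t ^ 3 * ε ^ 2 * t := le_mul_of_one_le_right (by positivity) ht
      _ = |t ^ 2 * ε| ^ 2 := by rw [sq_abs]; ring
      _ ≤ C ^ 2 := pow_le_pow_left₀ (abs_nonneg _) hℓ 2
  have hexpand : (N : ℝ) / (2 * σ ^ 2) * ℓ (j + 1) N ^ 2
      = 2 * N + 2 * (t ^ 3 * ε) / σ + t ^ 3 * ε ^ 2 / (2 * σ ^ 2) := by
    rw [hℓε, ← htN]; field_simp; ring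
  have hbound : 2 * (t ^ 3 * ε) / σ + t ^ 3 * ε ^ 2 / (2 * σ ^ 2) + (2 + δ) * j
      < δ * N := by
    have h1 : 2 * (t ^ 3 * ε) / σ ≤ t * (2 * C / σ) := by
      rw [mul_div_assoc', div_le_div_iff_of_pos_right hσ]; linarith
    have h2 : t ^ 3 * ε ^ 2 / (2 * σ ^ 2) ≤ t * (C ^ 2 / (2 * σ ^ 2)) :=
      (div_le_div_of_nonneg_right hquad (by positivity)).trans
        (le_mul_of_one_le_left (by positivity) ht)
    have h3 : (2 + δ) * j ≤ t * (3 * j) := by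
      linarith [mul_nonneg (sub_nonneg.2 hδ) hj0, mul_nonneg (sub_nonneg.2 ht) hj0]
    have hδN : δ * N = t * (t ^ 2 * δ) := by rw [← htN]; ring
    linarith [mul_lt_mul_of_pos_left hgap ht0]
  linarith

theorem eventually_GAIC_succ_lt_GAIC (hσ : 0 < σ) (hj : j < q) {L : ℝ}
    (hℓ : Tendsto (fun N => ℓ (j + 1) N) atTop (𝓝 L)) (hL : 2 * σ < L) {γ : ℕ → ℝ}
    (hγ : Tendsto γ atTop (𝓝 2)) :
    ∀ᶠ N in atTop, GAIC σ q ℓ (γ N) (j + 1) N < GAIC σ q ℓ (γ N) j N := by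
  have hlim : 2 < L ^ 2 / (2 * σ ^ 2) := by
    rw [lt_div_iff₀ (by positivity)]; nlinarith
  filter_upwards [hγ.eventually_const_le two_pos,
    hγ.eventually_lt ((hℓ.pow 2).div_const _) hlim, eventually_gt_atTop 0] with N hγ0 hγℓ hN
  exact GAIC_succ_lt_GAIC hj hN hγ0 hγℓ

theorem eventually_GAIC_lt_GAIC_succ (hσ : 0 < σ) (hj : j < q) {δ : ℕ → ℝ}
    (hδ0 : Tendsto δ atTop (𝓝 0))
    (hδtop : Tendsto (fun N : ℕ => (N : ℝ) ^ ((2 : ℝ) / 3) * δ N) atTop atTop) {C : ℝ}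
    (hC : ∀ N : ℕ, |(N : ℝ) ^ ((2 : ℝ) / 3) * (ℓ (j + 1) N - 2 * σ)| ≤ C) :
    ∀ᶠ N in atTop, GAIC σ q ℓ (2 + δ N) j N < GAIC σ q ℓ (2 + δ N) (j + 1) N := by
  filter_upwards [hδ0.eventually_le_const one_pos,
    hδtop.eventually_gt_atTop (2 * C / σ + C ^ 2 / (2 * σ ^ 2) + 3 * j),
    eventually_ge_atTop 1] with N hδ1 hgap hN
  have hN0 : (0 : ℝ) ≤ N := N.cast_nonneg
  have hpow (n : ℕ) : ((N : ℝ) ^ ((1 : ℝ) / 3)) ^ n = (N : ℝ) ^ ((n : ℝ) / 3) := by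
    rw [← Real.rpow_natCast, ← Real.rpow_mul hN0]; ring_nf
  refine GAIC_lt_GAIC_succ hσ hj (t := (N : ℝ) ^ ((1 : ℝ) / 3)) (C := C)
    (Real.one_le_rpow (by exact_mod_cast hN) (by norm_num)) ?_ ?_ hδ1 ?_
  · rw [hpow]; norm_num
  · rw [hpow]; exact_mod_cast hC N
  · rw [hpow]; exact_mod_cast hgap

end GAIC

theorem gaic_shrinking_penalty_consistency_general
    (σ : ℝ) (hσ : 0 < σ) (q k : ℕ) (hkq : k ≤ q)
    (lam : ℕ → ℝ)
    (hlam_gt : ∀ i : ℕ, 1 ≤ i → i ≤ k → σ < lam i)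
    (ℓ : ℕ → ℕ → ℝ)
    (hspike : ∀ i : ℕ, 1 ≤ i → i ≤ k →
      Tendsto (fun N : ℕ => ℓ i N) atTop (nhds (psi σ (lam i))))
    (δ : ℕ → ℝ)
    (hδ0 : Tendsto δ atTop (nhds 0))
    (hδtop : Tendsto (fun N : ℕ => (N : ℝ) ^ ((2 : ℝ) / 3) * δ N) atTop atTop)
    (C : ℝ)
    (hC : ∀ N i : ℕ, k < i → i ≤ q → |(N : ℝ) ^ ((2 : ℝ) / 3) * (ℓ i N - 2 * σ)| ≤ C) :
    ∃ N₀ : ℕ, ∀ N ≥ N₀, ∀ jstar : ℕ, jstar ≤ q →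
      (∀ j : ℕ, j ≤ q → GAIC σ q ℓ (2 + δ N) jstar N ≤ GAIC σ q ℓ (2 + δ N) j N) →
      jstar = k := by
  have hγ : Tendsto (fun N => 2 + δ N) atTop (𝓝 2) := by simpa using hδ0.const_add 2
  have hdown : ∀ᶠ N in atTop, ∀ j ∈ Finset.range k,
      GAIC σ q ℓ (2 + δ N) (j + 1) N < GAIC σ q ℓ (2 + δ N) j N := by
    refine (eventually_all_finset _).2 fun j hj => ?_
    have hjk : j < k := Finset.mem_range.1 hj
    have hσlam := hlam_gt (j + 1) (by omega) hjk
    exact eventually_GAIC_succ_lt_GAIC hσ (hjk.trans_le hkq) (hspike (j + 1) (by omega) hjk)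
      (two_mul_lt_psi (hσ.trans hσlam) hσlam.ne) hγ
  have hup : ∀ᶠ N in atTop, ∀ j ∈ Finset.Ico k q,
      GAIC σ q ℓ (2 + δ N) j N < GAIC σ q ℓ (2 + δ N) (j + 1) N := by
    refine (eventually_all_finset _).2 fun j hj => ?_
    obtain ⟨hkj, hjq⟩ := Finset.mem_Ico.1 hj
    exact eventually_GAIC_lt_GAIC_succ hσ hjq hδ0 hδtop fun N => hC N (j + 1) (by omega) hjq
  obtain ⟨N₀, hN₀⟩ := eventually_atTop.1 (hdown.and hup)
  refine ⟨N₀, fun N hN jstar hjstar hmin => ?_⟩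
  obtain ⟨hdownN, hupN⟩ := hN₀ N hN
  have hanti : StrictAntiOn (fun j => GAIC σ q ℓ (2 + δ N) j N) (Set.Iic k) :=
    strictAntiOn_Iic_of_succ_lt fun j hj => hdownN j (Finset.mem_range.2 hj)
  have hmono : StrictMonoOn (fun j => GAIC σ q ℓ (2 + δ N) j N) (Set.Icc k q) :=
    strictMonoOn_of_lt_add_one Set.ordConnected_Icc fun j _ hj hj' =>
      hupN j (Finset.mem_Ico.2 ⟨hj.1, Nat.lt_of_succ_le hj'.2⟩)
  exact eq_of_le_of_strictAntiOn_Iic_of_strictMonoOn_Icc hanti hmono hjstar (hmin k hkq)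

/-- Deterministic form of Theorem 2.2: if `δ_N > 0`, `δ_N → 0`, `N^{2/3}·δ_N → ∞`, and
`|N^{2/3}(ℓ_i(N) − 2σ)| ≤ C` for all `N` and all `k < i ≤ q`, then eventually every
`(2 + δ_N)`-minimizer `j*` satisfies `j* = k`. -/
theorem gaic_shrinking_penalty_consistency
    (σ : ℝ) (hσ : 0 < σ) (q k : ℕ) (hq : 1 ≤ q) (hkq : k ≤ q)
    (lam : ℕ → ℝ)
    (hlam_anti : ∀ i j : ℕ, 1 ≤ i → i ≤ j → j ≤ k → lam j ≤ lam i)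
    (hlam_gt : ∀ i : ℕ, 1 ≤ i → i ≤ k → σ < lam i)
    (ℓ : ℕ → ℕ → ℝ)
    (hℓ_anti : ∀ N i j : ℕ, 1 ≤ i → i ≤ j → j ≤ q → ℓ j N ≤ ℓ i N)
    (hspike : ∀ i : ℕ, 1 ≤ i → i ≤ k →
      Tendsto (fun N : ℕ => ℓ i N) atTop (nhds (psi σ (lam i))))
    (hbulk : ∀ i : ℕ, k < i → i ≤ q →
      Tendsto (fun N : ℕ => ℓ i N) atTop (nhds (2 * σ)))
    (δ : ℕ → ℝ) (hδpos : ∀ N : ℕ, 0 < δ N)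
    (hδ0 : Tendsto δ atTop (nhds 0))
    (hδtop : Tendsto (fun N : ℕ => (N : ℝ) ^ ((2 : ℝ) / 3) * δ N) atTop atTop)
    (C : ℝ)
    (hC : ∀ N i : ℕ, k < i → i ≤ q → |(N : ℝ) ^ ((2 : ℝ) / 3) * (ℓ i N - 2 * σ)| ≤ C) :
    ∃ N₀ : ℕ, ∀ N ≥ N₀, ∀ jstar : ℕ, jstar ≤ q →
      (∀ j : ℕ, j ≤ q → GAIC σ q ℓ (2 + δ N) jstar N ≤ GAIC σ q ℓ (2 + δ N) j N) →
      jstar = k :=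
  gaic_shrinking_penalty_consistency_general σ hσ q k hkq lam hlam_gt ℓ hspike δ hδ0 hδtop C hC
end

section
/- (Key estimate in the proof of Theorem 2.2.) Let (δ_N) be a sequence of positive reals with δ_N → 0 and N^{2/3}·δ_N → ∞ as N → ∞, and assume there is a constant C such that |N^{2/3}(ℓ_i(N) − 2σ)| ≤ C for all N and all k < i ≤ q. Then for every j with k < j ≤ q, there exists N₀ such that for all N ≥ N₀, (1/N)·(GAIC^{2+δ_N}_j(N) − GAIC^{2+δ_N}_k(N)) ≥ (1/2)·δ_N·(j − k). -/
open Filter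

lemma key_ineq (σ n T d jr kr S X C : ℝ)
    (hσ : 0 < σ) (hT1 : 1 ≤ T) (hTn : T ≤ n) (hC0 : 0 ≤ C)
    (hd0 : 0 < d) (hd1 : d ≤ 1) (hk0 : 0 ≤ kr) (hjk : kr + 1 ≤ jr)
    (hS : S * T ≤ (jr - kr) * (4 * σ ^ 2 * T + C * (C + 4 * σ)))
    (hTd : ((jr - kr) * C * (C + 4 * σ) / (2 * σ ^ 2)
        + 3 * ((jr * (jr - 1) - kr * (kr - 1)) / 2)) * 2 ≤ T * d) :
    1 / 2 * d * (jr - kr) ≤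
      1 / n * ((n / (2 * σ ^ 2)) * X + (2 + d) * (n * jr - jr * (jr - 1) / 2)
        - ((n / (2 * σ ^ 2)) * (S + X) + (2 + d) * (n * kr - kr * (kr - 1) / 2))) := by
  have hT0 : (0:ℝ) < T := lt_of_lt_of_le one_pos hT1
  have hn0 : (0:ℝ) < n := lt_of_lt_of_le hT0 hTn
  have hσ2 : (0:ℝ) < 2 * σ ^ 2 := by positivity
  have hP : 0 ≤ (jr * (jr - 1) - kr * (kr - 1)) / 2 := by
    nlinarith [mul_nonneg (by linarith : (0:ℝ) ≤ jr - kr) (by linarith : (0:ℝ) ≤ jr + kr - 1)]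
  have hE : 1 / n * ((n / (2 * σ ^ 2)) * X + (2 + d) * (n * jr - jr * (jr - 1) / 2)
        - ((n / (2 * σ ^ 2)) * (S + X) + (2 + d) * (n * kr - kr * (kr - 1) / 2)))
      = -(S / (2 * σ ^ 2)) + (2 + d) * (jr - kr)
        - (2 + d) * (((jr * (jr - 1) - kr * (kr - 1)) / 2) / n) := by
    field_simp
    ring
  rw [hE]
  have h2 : S / (2 * σ ^ 2) ≤ 2 * (jr - kr) + (jr - kr) * C * (C + 4 * σ) / (2 * σ ^ 2) / T := by
    rw [div_le_iff₀ hσ2]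
    have : S ≤ (jr - kr) * (4 * σ ^ 2 * T + C * (C + 4 * σ)) / T := by
      rw [le_div_iff₀ hT0]; exact hS
    calc S ≤ (jr - kr) * (4 * σ ^ 2 * T + C * (C + 4 * σ)) / T := this
      _ = (2 * (jr - kr) + (jr - kr) * C * (C + 4 * σ) / (2 * σ ^ 2) / T) * (2 * σ ^ 2) := by
        field_simp; ring
  have h3 : (2 + d) * (((jr * (jr - 1) - kr * (kr - 1)) / 2) / n)
      ≤ 3 * (((jr * (jr - 1) - kr * (kr - 1)) / 2) / T) := by
    have hPn : ((jr * (jr - 1) - kr * (kr - 1)) / 2) / n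
        ≤ ((jr * (jr - 1) - kr * (kr - 1)) / 2) / T :=
      div_le_div_of_nonneg_left hP hT0 hTn
    have hPn0 : 0 ≤ ((jr * (jr - 1) - kr * (kr - 1)) / 2) / n := by positivity
    nlinarith
  have h4 : (jr - kr) * C * (C + 4 * σ) / (2 * σ ^ 2) / T
        + 3 * (((jr * (jr - 1) - kr * (kr - 1)) / 2) / T) ≤ d * (jr - kr) / 2 := by
    have hkey : ((jr - kr) * C * (C + 4 * σ) / (2 * σ ^ 2)
        + 3 * ((jr * (jr - 1) - kr * (kr - 1)) / 2)) / T ≤ d / 2 := by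
      rw [div_le_iff₀ hT0]; linarith
    have hdm : d / 2 ≤ d * (jr - kr) / 2 := by nlinarith
    calc (jr - kr) * C * (C + 4 * σ) / (2 * σ ^ 2) / T
          + 3 * (((jr * (jr - 1) - kr * (kr - 1)) / 2) / T)
        = ((jr - kr) * C * (C + 4 * σ) / (2 * σ ^ 2)
            + 3 * ((jr * (jr - 1) - kr * (kr - 1)) / 2)) / T := by ring
      _ ≤ d / 2 := hkey
      _ ≤ d * (jr - kr) / 2 := hdm
  linarith

/-- Key estimate in the proof of Theorem 2.2: under the same assumptions, for every
`k < j ≤ q`, eventually `(1/N)(GAIC^{2+δ_N}_j(N) − GAIC^{2+δ_N}_k(N)) ≥ (1/2)δ_N(j − k)`. -/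
theorem gaic_shrinking_penalty_key_estimate
    (σ : ℝ) (hσ : 0 < σ) (q k : ℕ) (hq : 1 ≤ q) (hkq : k ≤ q)
    (lam : ℕ → ℝ)
    (hlam_anti : ∀ i j : ℕ, 1 ≤ i → i ≤ j → j ≤ k → lam j ≤ lam i)
    (hlam_gt : ∀ i : ℕ, 1 ≤ i → i ≤ k → σ < lam i)
    (ℓ : ℕ → ℕ → ℝ)
    (hℓ_anti : ∀ N i j : ℕ, 1 ≤ i → i ≤ j → j ≤ q → ℓ j N ≤ ℓ i N)
    (hspike : ∀ i : ℕ, 1 ≤ i → i ≤ k →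
      Tendsto (fun N : ℕ => ℓ i N) atTop (nhds (psi σ (lam i))))
    (hbulk : ∀ i : ℕ, k < i → i ≤ q →
      Tendsto (fun N : ℕ => ℓ i N) atTop (nhds (2 * σ)))
    (δ : ℕ → ℝ) (hδpos : ∀ N : ℕ, 0 < δ N)
    (hδ0 : Tendsto δ atTop (nhds 0))
    (hδtop : Tendsto (fun N : ℕ => (N : ℝ) ^ ((2 : ℝ) / 3) * δ N) atTop atTop)
    (C : ℝ)
    (hC : ∀ N i : ℕ, k < i → i ≤ q → |(N : ℝ) ^ ((2 : ℝ) / 3) * (ℓ i N - 2 * σ)| ≤ C)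
    (j : ℕ) (hkj : k < j) (hjq : j ≤ q) :
    ∃ N₀ : ℕ, ∀ N ≥ N₀,
      (1 / (N : ℝ)) * (GAIC σ q ℓ (2 + δ N) j N - GAIC σ q ℓ (2 + δ N) k N)
        ≥ (1 / 2) * δ N * ((j : ℝ) - (k : ℝ)) := by
  have hC0 : 0 ≤ C := le_trans (abs_nonneg _) (hC 0 j hkj hjq)
  have h1 : ∀ᶠ N in atTop, δ N ≤ 1 := hδ0.eventually (eventually_le_nhds one_pos)
  have h2 : ∀ᶠ N : ℕ in atTop,
      (((j:ℝ) - (k:ℝ)) * C * (C + 4 * σ) / (2 * σ ^ 2)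
        + 3 * (((j:ℝ) * ((j:ℝ) - 1) - (k:ℝ) * ((k:ℝ) - 1)) / 2)) * 2
        ≤ (N : ℝ) ^ ((2 : ℝ) / 3) * δ N := hδtop.eventually_ge_atTop _
  have h3 : ∀ᶠ N : ℕ in atTop, 1 ≤ N := eventually_ge_atTop 1
  obtain ⟨N₀, hN₀⟩ := eventually_atTop.mp ((h1.and h2).and h3)
  refine ⟨N₀, fun N hN => ?_⟩
  obtain ⟨⟨hd1, hTd⟩, hN1⟩ := hN₀ N hN
  have hx1 : (1:ℝ) ≤ (N:ℝ) := by exact_mod_cast hN1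
  have hT1 : (1:ℝ) ≤ (N:ℝ) ^ ((2:ℝ)/3) := by
    calc (1:ℝ) = (N:ℝ) ^ (0:ℝ) := (Real.rpow_zero _).symm
      _ ≤ (N:ℝ) ^ ((2:ℝ)/3) := Real.rpow_le_rpow_of_exponent_le hx1 (by norm_num)
  have hTn : (N:ℝ) ^ ((2:ℝ)/3) ≤ (N:ℝ) := by
    calc (N:ℝ) ^ ((2:ℝ)/3) ≤ (N:ℝ) ^ (1:ℝ) :=
        Real.rpow_le_rpow_of_exponent_le hx1 (by norm_num)
      _ = (N:ℝ) := Real.rpow_one _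
  have hsum : ∑ i ∈ Finset.Icc (k + 1) q, ℓ i N ^ 2
      = ∑ i ∈ Finset.Icc (k + 1) j, ℓ i N ^ 2 + ∑ i ∈ Finset.Icc (j + 1) q, ℓ i N ^ 2 := by
    rw [Finset.Icc_add_one_left_eq_Ioc, Finset.Icc_add_one_left_eq_Ioc, Finset.Icc_add_one_left_eq_Ioc,
      Finset.sum_Ioc_consecutive _ hkj.le hjq]
  have hterm : ∀ i ∈ Finset.Icc (k + 1) j,
      ℓ i N ^ 2 * (N:ℝ) ^ ((2:ℝ)/3) ≤ 4 * σ ^ 2 * (N:ℝ) ^ ((2:ℝ)/3) + C * (C + 4 * σ) := by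
    intro i hi
    rw [Finset.mem_Icc] at hi
    have hik : k < i := hi.1
    have hiq : i ≤ q := le_trans hi.2 hjq
    have ha := abs_le.mp (hC N i hik hiq)
    set T := (N:ℝ) ^ ((2:ℝ)/3) with hTdef
    have hh1 : 0 ≤ (C - T * (ℓ i N - 2 * σ)) * (C + T * (ℓ i N - 2 * σ)) :=
      mul_nonneg (by linarith [ha.2]) (by linarith [ha.1])
    have hh2 : 0 ≤ (ℓ i N - 2 * σ) ^ 2 * (T * (T - 1)) :=
      mul_nonneg (sq_nonneg _) (mul_nonneg (by linarith) (by linarith))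
    have hh3 : 0 ≤ σ * (C - T * (ℓ i N - 2 * σ)) := mul_nonneg hσ.le (by linarith [ha.2])
    nlinarith [hh1, hh2, hh3]
  have hcard : ((Finset.Icc (k + 1) j).card : ℝ) = (j:ℝ) - (k:ℝ) := by
    have h : (Finset.Icc (k + 1) j).card = j - k := by rw [Nat.card_Icc]; omega
    rw [h, Nat.cast_sub hkj.le]
  have hS : (∑ i ∈ Finset.Icc (k + 1) j, ℓ i N ^ 2) * (N:ℝ) ^ ((2:ℝ)/3)
      ≤ ((j:ℝ) - (k:ℝ)) * (4 * σ ^ 2 * (N:ℝ) ^ ((2:ℝ)/3) + C * (C + 4 * σ)) := by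
    rw [Finset.sum_mul]
    calc ∑ i ∈ Finset.Icc (k + 1) j, ℓ i N ^ 2 * (N:ℝ) ^ ((2:ℝ)/3)
        ≤ (Finset.Icc (k + 1) j).card •
          (4 * σ ^ 2 * (N:ℝ) ^ ((2:ℝ)/3) + C * (C + 4 * σ)) :=
          Finset.sum_le_card_nsmul _ _ _ hterm
      _ = ((j:ℝ) - (k:ℝ)) * (4 * σ ^ 2 * (N:ℝ) ^ ((2:ℝ)/3) + C * (C + 4 * σ)) := by
          rw [nsmul_eq_mul, hcard]
  have hjk : (k:ℝ) + 1 ≤ (j:ℝ) := by exact_mod_cast hkj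
  rw [ge_iff_le]
  simp only [GAIC]
  rw [hsum]
  exact key_ineq σ (N:ℝ) ((N:ℝ) ^ ((2:ℝ)/3)) (δ N) (j:ℝ) (k:ℝ) _ _ C hσ hT1 hTn hC0
    (hδpos N) hd1 (Nat.cast_nonneg k) hjk hS hTd
end

section
/- (Best rank-j positive semidefinite approximation; MLE of the signal matrix for known σ.) Let n ≥ 1 and let X be a real symmetric n×n matrix with spectral decomposition X = Σ_{i=1}^{n} ℓ_i v_i v_iᵀ, where ℓ_1 ≥ ⋯ ≥ ℓ_n are the eigenvalues and v_1, …, v_n are orthonormal eigenvectors. Fix 0 ≤ j ≤ n and define Â_j = Σ_{i=1}^{j} max(ℓ_i, 0) v_i v_iᵀ. Then for every real symmetric positive semidefinite n×n matrix B with rank(B) ≤ j, one has ‖X − Â_j‖_F ≤ ‖X − B‖_F, where ‖M‖_F² = Σ_{a,b} M_{ab}² denotes the squared Frobenius norm. -/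
/-!
Expanding both squared Frobenius distances and writing `B = ∑ₖ μₖ wₖwₖᵀ` in an orthonormal
eigenbasis reduces the claim to `2 ∑ᵢₖ ℓᵢ μₖ ⟨vᵢ, wₖ⟩² - ∑ₖ μₖ² ≤ ∑_{i<j} (ℓᵢ⁺)²`.
The weights `⟨vᵢ, wₖ⟩²` are the squared entries of the orthogonal matrix `V Wᵀ`, so they are
doubly stochastic. For each `k`, with `q = ∑ᵢ ⟨vᵢ, wₖ⟩² ℓᵢ`, the bound `2μq - μ² ≤ (q⁺)²` and
Cauchy–Schwarz bound the `k`-th term by `∑ᵢ ⟨vᵢ, wₖ⟩² (ℓᵢ⁺)²`. Only the at most `j` indices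
with `μₖ ≠ 0` contribute, so the total weight `tᵢ ∈ [0, 1]` put on `i` sums to at most `j`; as
`(ℓᵢ⁺)²` decreases in `i`, such a weighting is dominated by weight one on the first `j` indices.
-/

open Finset Matrix

section RankOne

variable {m n ι κ : Type*} [Fintype m]

theorem sum_sum_sub_sq [Fintype n] (M N : Matrix m n ℝ) :
    ∑ a, ∑ b, (M a b - N a b) ^ 2 =
      ∑ a, ∑ b, M a b * M a b - 2 * ∑ a, ∑ b, M a b * N a b + ∑ a, ∑ b, N a b * N a b := by
  simp only [sub_sq, sum_add_distrib, sum_sub_distrib, Finset.mul_sum]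
  ring_nf

theorem sum_sum_mul_sum_vecMulVec (S : Finset ι) (T : Finset κ) (c : ι → ℝ) (d : κ → ℝ)
    (u : ι → m → ℝ) (w : κ → m → ℝ) :
    ∑ a, ∑ b, (∑ i ∈ S, c i • vecMulVec (u i) (u i)) a b *
        (∑ k ∈ T, d k • vecMulVec (w k) (w k)) a b =
      ∑ i ∈ S, ∑ k ∈ T, c i * d k * (u i ⬝ᵥ w k) ^ 2 := by
  refine (sum_hadamard_eq _ _).trans ?_
  simp only [transpose_sum, transpose_smul, transpose_vecMulVec, Matrix.sum_mul, Matrix.smul_mul,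
    Matrix.mul_smul, vecMulVec_mul_vecMulVec, trace_sum, trace_smul, trace_vecMulVec,
    dotProduct_smul, smul_eq_mul, Finset.mul_sum]
  rw [sum_comm]
  refine sum_congr rfl fun i _ => sum_congr rfl fun k _ => ?_
  ring

theorem sum_sum_mul_sum_vecMulVec_of_mul_transpose_eq_one [Fintype ι] [DecidableEq ι]
    {U : ι → m → ℝ} (hU : of U * (of U)ᵀ = 1) (S T : Finset ι) (c d : ι → ℝ) :
    ∑ a, ∑ b, (∑ i ∈ S, c i • vecMulVec (U i) (U i)) a b *
        (∑ k ∈ T, d k • vecMulVec (U k) (U k)) a b =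
      ∑ i ∈ S ∩ T, c i * d i := by
  have hdot (i k : ι) : U i ⬝ᵥ U k = if i = k then 1 else 0 := by
    rw [← one_apply, ← hU, mul_apply']
    rfl
  rw [sum_sum_mul_sum_vecMulVec S T c d U U]
  simp only [hdot, ite_pow, one_pow, ne_eq, OfNat.ofNat_ne_zero,
    not_false_eq_true, zero_pow, mul_ite, mul_one, mul_zero, sum_ite_eq, sum_ite_mem]

end RankOne

section Orthogonal

variable {m : Type*} [Fintype m] [DecidableEq m]

theorem sum_sq_row_eq_one_of_mul_transpose_eq_one {Q : Matrix m m ℝ} (hQ : Q * Qᵀ = 1)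
    (i : m) : ∑ k, Q i k ^ 2 = 1 := by
  simpa [mul_apply, sq] using congr_fun₂ hQ i i

theorem sum_sq_col_eq_one_of_mul_transpose_eq_one {Q : Matrix m m ℝ} (hQ : Q * Qᵀ = 1)
    (k : m) : ∑ i, Q i k ^ 2 = 1 := by
  simpa [mul_apply, sq] using congr_fun₂ (mul_eq_one_comm.mp hQ : Qᵀ * Q = 1) k k

theorem mul_transpose_mul_transpose_eq_one {V W : Matrix m m ℝ} (hV : V * Vᵀ = 1)
    (hW : W * Wᵀ = 1) : V * Wᵀ * (V * Wᵀ)ᵀ = 1 := by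
  rw [transpose_mul, transpose_transpose, Matrix.mul_assoc, ← Matrix.mul_assoc Wᵀ,
    mul_eq_one_comm.mp hW, Matrix.one_mul, hV]

theorem Matrix.PosSemidef.exists_sum_vecMulVec {B : Matrix m m ℝ} (hB : B.PosSemidef) :
    ∃ (μ : m → ℝ) (W : Matrix m m ℝ), (∀ k, 0 ≤ μ k) ∧ W * Wᵀ = 1 ∧
      B = ∑ k, μ k • vecMulVec (W k) (W k) ∧ #{k | μ k ≠ 0} = B.rank := by
  set U := hB.isHermitian.eigenvectorUnitary
  refine ⟨hB.isHermitian.eigenvalues, (U : Matrix m m ℝ)ᵀ, hB.eigenvalues_nonneg, ?_, ?_, ?_⟩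
  · simpa [star_eq_conjTranspose] using Unitary.coe_star_mul_self U
  · conv_lhs => rw [hB.isHermitian.spectral_theorem, Unitary.conjStarAlgAut_apply]
    ext a b
    simp only [RCLike.ofReal_real_eq_id, CompTriple.comp_eq, star_eq_conjTranspose,
      conjTranspose_eq_transpose_of_trivial, mul_apply, IsHermitian.eigenvectorUnitary_apply,
      diagonal_apply, mul_ite, mul_zero, sum_ite_eq', mem_univ, ↓reduceIte, transpose_apply,
      IsHermitian.eigenvectorUnitary_transpose_apply, Matrix.sum_apply, smul_apply,
      vecMulVec_apply, smul_eq_mul, U]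
    exact sum_congr rfl fun k _ => by ring
  · rw [hB.isHermitian.rank_eq_card_non_zero_eigs, Fintype.card_subtype]

end Orthogonal

theorem two_mul_mul_sum_sub_sq_le {ι : Type*} [Fintype ι] {c : ι → ℝ} (hc : ∀ i, 0 ≤ c i)
    (hc1 : ∑ i, c i ≤ 1) (x : ι → ℝ) {μ : ℝ} (hμ : 0 ≤ μ) :
    2 * μ * ∑ i, c i * x i - μ ^ 2 ≤ ∑ i, c i * max (x i) 0 ^ 2 := by
  set s := ∑ i, c i * max (x i) 0
  have hxs : ∑ i, c i * x i ≤ s :=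
    sum_le_sum fun i _ => mul_le_mul_of_nonneg_left (le_max_left _ _) (hc i)
  have hs : s ^ 2 ≤ ∑ i, c i * max (x i) 0 ^ 2 := by
    have hCS : s ^ 2 ≤ (∑ i, c i) * ∑ i, c i * max (x i) 0 ^ 2 :=
      sum_sq_le_sum_mul_sum_of_sq_le_mul _ (fun i _ => hc i)
        (fun i _ => mul_nonneg (hc i) (sq_nonneg _)) fun i _ => (by ring : _ = _).le
    have hnonneg : 0 ≤ ∑ i, c i * max (x i) 0 ^ 2 :=
      sum_nonneg fun i _ => mul_nonneg (hc i) (sq_nonneg _)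
    nlinarith
  nlinarith [sq_nonneg (s - μ), mul_le_mul_of_nonneg_left hxs hμ]

theorem sum_mul_le_sum_of_threshold {ι : Type*} [Fintype ι] [DecidableEq ι] (P : Finset ι)
    {g t : ι → ℝ} {γ : ℝ} (hγ : 0 ≤ γ) (hP : ∀ i ∈ P, γ ≤ g i) (hPc : ∀ i ∉ P, g i ≤ γ)
    (ht0 : ∀ i, 0 ≤ t i) (ht1 : ∀ i, t i ≤ 1) (ht : ∑ i, t i ≤ #P) :
    ∑ i, t i * g i ≤ ∑ i ∈ P, g i := by
  have hterm (i : ι) :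
      t i * g i ≤ (if i ∈ P then g i else 0) + γ * (t i - if i ∈ P then 1 else 0) := by
    split_ifs with hi
    · nlinarith [hP i hi, ht1 i]
    · nlinarith [hPc i hi, ht0 i]
  calc ∑ i, t i * g i
      ≤ ∑ i, ((if i ∈ P then g i else 0) + γ * (t i - if i ∈ P then 1 else 0)) :=
        sum_le_sum fun i _ => hterm i
    _ = ∑ i ∈ P, g i + γ * (∑ i, t i - #P) := by
        simp [sum_add_distrib, ← Finset.mul_sum, sum_sub_distrib, sum_ite_mem]
    _ ≤ ∑ i ∈ P, g i := by nlinarith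

theorem Antitone.sum_mul_le_sum_filter_lt {n : ℕ} {g : Fin n → ℝ} (hg : Antitone g)
    (hg0 : ∀ i, 0 ≤ g i) {t : Fin n → ℝ} (ht0 : ∀ i, 0 ≤ t i) (ht1 : ∀ i, t i ≤ 1) {j : ℕ}
    (ht : ∑ i, t i ≤ j) :
    ∑ i, t i * g i ≤ ∑ i ∈ univ.filter (fun i : Fin n => (i : ℕ) < j), g i := by
  have hcard : ∑ i, t i ≤ #(univ.filter (fun i : Fin n => (i : ℕ) < j)) := by
    have hn : ∑ i, t i ≤ n := by simpa using sum_le_sum fun i (_ : i ∈ univ) => ht1 i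
    rw [Fin.card_filter_val_lt, Nat.cast_min]
    exact le_min hn ht
  by_cases hj : j < n
  · refine sum_mul_le_sum_of_threshold _ (hg0 ⟨j, hj⟩) (fun i hi => hg ?_) (fun i hi => hg ?_)
      ht0 ht1 hcard
    · simp only [mem_filter, mem_univ, true_and] at hi
      exact Fin.le_def.mpr hi.le
    · simp only [mem_filter, mem_univ, true_and, not_lt] at hi
      exact Fin.le_def.mpr hi
  · refine sum_mul_le_sum_of_threshold _ le_rfl (fun i _ => hg0 i) (fun i hi => ?_) ht0 ht1 hcard
    simp only [mem_filter, mem_univ, true_and] at hi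
    omega

theorem two_mul_sum_sum_sub_sum_sq_le {n j : ℕ} {ℓ : Fin n → ℝ} (hℓ : Antitone ℓ)
    {μ : Fin n → ℝ} (hμ : ∀ k, 0 ≤ μ k) (hμj : #(univ.filter fun k => μ k ≠ 0) ≤ j)
    {Q : Matrix (Fin n) (Fin n) ℝ} (hQ : Q * Qᵀ = 1) :
    2 * ∑ i, ∑ k, ℓ i * μ k * Q i k ^ 2 - ∑ k, μ k ^ 2 ≤
      ∑ i ∈ univ.filter (fun i : Fin n => (i : ℕ) < j), max (ℓ i) 0 ^ 2 := by
  set K := univ.filter fun k => μ k ≠ 0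
  have hrow (i : Fin n) : ∑ k ∈ K, Q i k ^ 2 ≤ 1 :=
    (sum_le_sum_of_subset_of_nonneg (subset_univ K) fun k _ _ => sq_nonneg _).trans
      (sum_sq_row_eq_one_of_mul_transpose_eq_one hQ i).le
  have hmass : ∑ i, ∑ k ∈ K, Q i k ^ 2 ≤ j := by
    rw [sum_comm]
    simp only [sum_sq_col_eq_one_of_mul_transpose_eq_one hQ, sum_const, nsmul_eq_mul, mul_one]
    exact_mod_cast hμj
  have hg : Antitone fun i => max (ℓ i) 0 ^ 2 := fun i i' h =>
    pow_le_pow_left₀ (le_max_right _ _) (max_le_max_right 0 (hℓ h)) 2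
  calc 2 * ∑ i, ∑ k, ℓ i * μ k * Q i k ^ 2 - ∑ k, μ k ^ 2
      = ∑ k, (2 * μ k * ∑ i, Q i k ^ 2 * ℓ i - μ k ^ 2) := by
        rw [sum_comm, Finset.mul_sum, ← sum_sub_distrib]
        refine sum_congr rfl fun k _ => ?_
        simp only [Finset.mul_sum]
        exact congrArg (· - _) (sum_congr rfl fun i _ => by ring)
    _ = ∑ k ∈ K, (2 * μ k * ∑ i, Q i k ^ 2 * ℓ i - μ k ^ 2) :=
        (sum_filter_of_ne (p := fun k => μ k ≠ 0) fun k _ hk hμk => hk (by simp [hμk])).symm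
    _ ≤ ∑ k ∈ K, ∑ i, Q i k ^ 2 * max (ℓ i) 0 ^ 2 :=
        sum_le_sum fun k _ => two_mul_mul_sum_sub_sq_le (fun i => sq_nonneg _)
          (sum_sq_col_eq_one_of_mul_transpose_eq_one hQ k).le _ (hμ k)
    _ = ∑ i, (∑ k ∈ K, Q i k ^ 2) * max (ℓ i) 0 ^ 2 := by
        rw [sum_comm]
        simp only [Finset.sum_mul]
    _ ≤ _ := hg.sum_mul_le_sum_filter_lt (fun i => sq_nonneg _)
        (fun i => sum_nonneg fun k _ => sq_nonneg _) hrow hmass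

theorem best_rank_j_psd_approximation_general (n : ℕ)
    (X : Matrix (Fin n) (Fin n) ℝ) (ℓ : Fin n → ℝ) (v : Fin n → Fin n → ℝ)
    (hmono : ∀ i i' : Fin n, i ≤ i' → ℓ i' ≤ ℓ i)
    (horth : ∀ i i' : Fin n, ∑ a, v i a * v i' a = if i = i' then 1 else 0)
    (hX : X = ∑ i, ℓ i • Matrix.vecMulVec (v i) (v i))
    (j : ℕ)
    (B : Matrix (Fin n) (Fin n) ℝ) (hB : B.PosSemidef) (hrank : B.rank ≤ j) :
    Real.sqrt (∑ a, ∑ b,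
        (X a b - (∑ i ∈ Finset.univ.filter (fun i : Fin n => (i : ℕ) < j),
          max (ℓ i) 0 • Matrix.vecMulVec (v i) (v i)) a b) ^ 2)
      ≤ Real.sqrt (∑ a, ∑ b, (X a b - B a b) ^ 2) := by
  obtain ⟨μ, W, hμ, hW, rfl, hμrank⟩ := hB.exists_sum_vecMulVec
  have hV : of v * (of v)ᵀ = 1 := by
    ext i i'
    simpa [mul_apply, one_apply] using horth i i'
  have hmul_max (x : ℝ) : x * max x 0 = max x 0 ^ 2 := by
    rcases le_total x 0 with hx | hx <;> simp [hx, sq]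
  have key := two_mul_sum_sum_sub_sum_sq_le hmono hμ (hμrank.trans_le hrank)
    (mul_transpose_mul_transpose_eq_one hV hW)
  have hQ (i k : Fin n) : (of v * Wᵀ) i k = v i ⬝ᵥ W k := rfl
  subst hX
  refine Real.sqrt_le_sqrt ?_
  rw [sum_sum_sub_sq, sum_sum_sub_sq]
  simp only [sum_sum_mul_sum_vecMulVec_of_mul_transpose_eq_one hV,
    sum_sum_mul_sum_vecMulVec_of_mul_transpose_eq_one hW]
  rw [sum_sum_mul_sum_vecMulVec _ _ _ _ v W]
  simp only [univ_inter, inter_self, hmul_max, hQ, ← sq] at key ⊢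
  linarith

/-- Best rank-`j` positive semidefinite approximation. If the real symmetric matrix `X`
has spectral decomposition `X = Σ ℓ_i v_i v_iᵀ` with `ℓ_1 ≥ ⋯ ≥ ℓ_n` and orthonormal
`v_i`, and `Â_j = Σ_{i ≤ j} max(ℓ_i, 0) v_i v_iᵀ`, then `‖X − Â_j‖_F ≤ ‖X − B‖_F` for
every positive semidefinite `B` of rank at most `j`. -/
theorem best_rank_j_psd_approximation (n : ℕ) (hn : 1 ≤ n)
    (X : Matrix (Fin n) (Fin n) ℝ) (ℓ : Fin n → ℝ) (v : Fin n → Fin n → ℝ)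
    (hmono : ∀ i i' : Fin n, i ≤ i' → ℓ i' ≤ ℓ i)
    (horth : ∀ i i' : Fin n, ∑ a, v i a * v i' a = if i = i' then 1 else 0)
    (hX : X = ∑ i, ℓ i • Matrix.vecMulVec (v i) (v i))
    (j : ℕ) (hj : j ≤ n)
    (B : Matrix (Fin n) (Fin n) ℝ) (hB : B.PosSemidef) (hrank : B.rank ≤ j) :
    Real.sqrt (∑ a, ∑ b,
        (X a b - (∑ i ∈ Finset.univ.filter (fun i : Fin n => (i : ℕ) < j),
          max (ℓ i) 0 • Matrix.vecMulVec (v i) (v i)) a b) ^ 2)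
      ≤ Real.sqrt (∑ a, ∑ b, (X a b - B a b) ^ 2) :=
  best_rank_j_psd_approximation_general n X ℓ v hmono horth hX j B hB hrank
end
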